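/- arXiv:1701.02045 — 3 statements merged into one kernel-verified Lean document; each statement's English description precedes it below -/
import Mathlib

section
/- Let M be an n×n real symmetric positive definite matrix with M_{ij} ≤ 0 for all i ≠ j. Then (M⁻¹)_{ii} > 0 for every index i, and if i, j are indices for which there exist k₀ = i, k₁, …, k_r = j with M_{k_t k_{t+1}} ≠ 0 for all 0 ≤ t < r, then (M⁻¹)_{ij} > 0. -/
/-!
A symmetric positive definite Z-matrix `M` is inverse-positive: if `M x ≥ 0` then `x ≥ 0`.
Indeed, writing `x = x⁺ - x⁻`, the off-diagonal sign condition and the disjoint supports of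
`x⁺` and `x⁻` give `x⁻ ⬝ M x⁺ ≤ 0`, while `x⁻ ⬝ M x ≥ 0`; hence `x⁻ ⬝ M x⁻ ≤ 0` and `x⁻ = 0`.
Applied to the columns of `M⁻¹` this gives `M⁻¹ ≥ 0`. Row `i` of `M M⁻¹ = 1` then reads
`M i i * M⁻¹ i j = δ i j + ∑_{l ≠ i} (-M i l) * M⁻¹ l j`, a sum of nonnegative terms, so
positivity of `M⁻¹ k j` propagates to `M⁻¹ i j` along every edge `M i k ≠ 0`; the walk starts
from the positive diagonal of the positive definite matrix `M⁻¹`.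
-/

open Matrix

variable {ι : Type*} [Fintype ι]

def Matrix.IsZMatrix (M : Matrix ι ι ℝ) : Prop :=
  ∀ i j, i ≠ j → M i j ≤ 0

namespace Matrix.IsZMatrix

variable {M : Matrix ι ι ℝ}

lemma dotProduct_mulVec_nonpos (hZ : M.IsZMatrix) {y z : ι → ℝ} (hy : 0 ≤ y) (hz : 0 ≤ z)
    (hyz : ∀ i, y i * z i = 0) : y ⬝ᵥ M *ᵥ z ≤ 0 := by
  simp only [dotProduct, mulVec, Finset.mul_sum]
  refine Finset.sum_nonpos fun i _ => Finset.sum_nonpos fun k _ => ?_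
  rcases eq_or_ne i k with rfl | hik
  · rw [mul_left_comm, hyz i, mul_zero]
  · exact mul_nonpos_of_nonneg_of_nonpos (hy i)
      (mul_nonpos_of_nonpos_of_nonneg (hZ i k hik) (hz k))

lemma nonneg_of_mulVec_nonneg (hZ : M.IsZMatrix) (hM : M.PosDef) {x : ι → ℝ}
    (hx : 0 ≤ M *ᵥ x) : 0 ≤ x := by
  have hdisj : ∀ i, x⁻ i * x⁺ i = 0 := fun i => by
    rcases le_total (x i) 0 with h | h <;> simp [h]
  have hpos : 0 ≤ x⁻ ⬝ᵥ M *ᵥ x := dotProduct_nonneg_of_nonneg (negPart_nonneg x) hx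
  have hcross : x⁻ ⬝ᵥ M *ᵥ x⁺ ≤ 0 :=
    hZ.dotProduct_mulVec_nonpos (negPart_nonneg x) (posPart_nonneg x) hdisj
  have hsplit : x⁻ ⬝ᵥ M *ᵥ x = x⁻ ⬝ᵥ M *ᵥ x⁺ - x⁻ ⬝ᵥ M *ᵥ x⁻ := by
    rw [← dotProduct_sub, ← mulVec_sub, posPart_sub_negPart]
  have hneg : x⁻ ⬝ᵥ M *ᵥ x⁻ ≤ 0 := (sub_nonneg.mp (hsplit ▸ hpos)).trans hcross
  have hzero : x⁻ = 0 := by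
    by_contra h
    exact (hM.dotProduct_mulVec_pos h).not_ge (by simpa using hneg)
  rw [← posPart_sub_negPart x, hzero, sub_zero]
  exact posPart_nonneg x

lemma inv_nonneg [DecidableEq ι] (hZ : M.IsZMatrix) (hM : M.PosDef) (i j : ι) :
    0 ≤ M⁻¹ i j := by
  have hcol : M *ᵥ (M⁻¹ *ᵥ Pi.single j 1) = Pi.single j 1 := by
    rw [mulVec_mulVec, mul_nonsing_inv M hM.det_pos.ne'.isUnit, one_mulVec]
  have := hZ.nonneg_of_mulVec_nonneg hM (hcol ▸ Pi.single_nonneg.mpr zero_le_one) i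
  simpa [mulVec_single_one] using this

lemma inv_pos_of_ne_zero [DecidableEq ι] (hZ : M.IsZMatrix) (hM : M.PosDef) {i k j : ι}
    (hik : i ≠ k) (hMik : M i k ≠ 0) (hkj : 0 < M⁻¹ k j) : 0 < M⁻¹ i j := by
  have hrow : M i i * M⁻¹ i j + ∑ l ∈ Finset.univ.erase i, M i l * M⁻¹ l j =
      (1 : Matrix ι ι ℝ) i j := by
    rw [Finset.add_sum_erase _ (fun l => M i l * M⁻¹ l j) (Finset.mem_univ i), ← mul_apply,
      mul_nonsing_inv M hM.det_pos.ne'.isUnit]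
  have hrest : ∑ l ∈ Finset.univ.erase i, M i l * M⁻¹ l j < 0 := by
    refine Finset.sum_neg' (fun l hl => ?_)
      ⟨k, Finset.mem_erase.mpr ⟨hik.symm, Finset.mem_univ k⟩, ?_⟩
    · exact mul_nonpos_of_nonpos_of_nonneg (hZ i l (Finset.ne_of_mem_erase hl).symm)
        (hZ.inv_nonneg hM l j)
    · exact mul_neg_of_neg_of_pos ((hZ i k hik).lt_of_ne hMik) hkj
  have hone : 0 ≤ (1 : Matrix ι ι ℝ) i j := by
    rw [one_apply]; split_ifs <;> norm_num
  have hprod : 0 < M i i * M⁻¹ i j :=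
    eq_sub_of_add_eq hrow ▸ sub_pos.mpr (hrest.trans_le hone)
  exact pos_of_mul_pos_right hprod hM.diag_pos.le

lemma inv_pos_of_reflTransGen [DecidableEq ι] (hZ : M.IsZMatrix) (hM : M.PosDef) {i j : ι}
    (hij : Relation.ReflTransGen (fun a b => M a b ≠ 0) i j) : 0 < M⁻¹ i j := by
  induction hij using Relation.ReflTransGen.head_induction_on with
  | refl => exact hM.inv.diag_pos
  | @head a b hab _ hbj =>
    rcases eq_or_ne a b with rfl | hne
    · exact hbj
    · exact hZ.inv_pos_of_ne_zero hM hne hab hbj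

end Matrix.IsZMatrix

lemma Relation.reflTransGen_of_seq {α : Type*} {r : α → α → Prop} {k : ℕ → α} {n : ℕ}
    (hk : ∀ t < n, r (k t) (k (t + 1))) : Relation.ReflTransGen r (k 0) (k n) := by
  induction n with
  | zero => rfl
  | succ n ih => exact (ih fun t ht => hk t (by omega)).tail (hk n (by omega))

/-- For a real symmetric positive definite matrix with nonpositive off-diagonal
entries, the diagonal entries of the inverse are strictly positive, and the
(i,j) entry of the inverse is strictly positive whenever j is reachable from i
by a walk along nonzero entries of M. -/
theorem stmt1 {n : ℕ} (M : Matrix (Fin n) (Fin n) ℝ)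
    (hsym : Mᵀ = M)
    (hpd : ∀ x : Fin n → ℝ, x ≠ 0 → 0 < x ⬝ᵥ M.mulVec x)
    (hZ : ∀ i j : Fin n, i ≠ j → M i j ≤ 0) :
    (∀ i : Fin n, 0 < M⁻¹ i i) ∧
    (∀ i j : Fin n,
      (∃ (r : ℕ) (k : ℕ → Fin n), k 0 = i ∧ k r = j ∧
        ∀ t : ℕ, t < r → M (k t) (k (t + 1)) ≠ 0) →
      0 < M⁻¹ i j) := by
  have hM : M.PosDef :=
    .of_dotProduct_mulVec_pos (by simpa [IsHermitian] using hsym) fun x hx => by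
      simpa using hpd x hx
  have hZM : M.IsZMatrix := hZ
  refine ⟨fun i => hM.inv.diag_pos, ?_⟩
  rintro i j ⟨r, k, rfl, rfl, hwalk⟩
  exact hZM.inv_pos_of_reflTransGen hM (Relation.reflTransGen_of_seq hwalk)
end

section
/- Every component of the open-circuit load voltage vector V_L* = −B_LL⁻¹ B_LG V_G is strictly positive. -/
/-!
Writing `A = -B_LL`, the load voltages solve `A V_L* = B_LG V_G ≥ 0`, and `A` is a positive
definite matrix with nonpositive off-diagonal entries. For such a matrix, testing the quadratic
form on the negative part of `V_L*` shows that this part vanishes, so `V_L* ≥ 0`. Then the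
extended voltage vector `(V_L*, V_G)` is nonnegative and each load row of `B` annihilates it;
a zero entry at a load therefore forces zeros at all its neighbours, and following a path to a
generator contradicts `V_G > 0`.
-/

open Matrix

/-- The load–load block of the susceptance matrix. -/
def BLL {n m : ℕ} (B : Matrix (Fin n ⊕ Fin m) (Fin n ⊕ Fin m) ℝ) :
    Matrix (Fin n) (Fin n) ℝ :=
  Matrix.of fun i j => B (Sum.inl i) (Sum.inl j)

/-- The load–generator block of the susceptance matrix. -/
def BLG {n m : ℕ} (B : Matrix (Fin n ⊕ Fin m) (Fin n ⊕ Fin m) ℝ) :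
    Matrix (Fin n) (Fin m) ℝ :=
  Matrix.of fun i j => B (Sum.inl i) (Sum.inr j)

/-- Open-circuit load voltages  V_L* = −B_LL⁻¹ B_LG V_G. -/
noncomputable def VLstar {n m : ℕ} (B : Matrix (Fin n ⊕ Fin m) (Fin n ⊕ Fin m) ℝ)
    (VG : Fin m → ℝ) : Fin n → ℝ :=
  -((BLL B)⁻¹.mulVec ((BLG B).mulVec VG))

namespace Matrix

section ZMatrix

variable {ι : Type*} [Fintype ι]

theorem dotProduct_mulVec_nonpos_of_offDiag_nonpos {A : Matrix ι ι ℝ}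
    (hoff : ∀ i j, i ≠ j → A i j ≤ 0) {u v : ι → ℝ} (hu : 0 ≤ u) (hv : 0 ≤ v)
    (huv : ∀ i, u i * v i = 0) : u ⬝ᵥ (A *ᵥ v) ≤ 0 := by
  simp only [dotProduct, mulVec, Finset.mul_sum]
  refine Finset.sum_nonpos fun i _ => Finset.sum_nonpos fun j _ => ?_
  by_cases hij : i = j
  · subst hij
    rw [mul_left_comm, huv, mul_zero]
  · rw [mul_left_comm]
    exact mul_nonpos_of_nonpos_of_nonneg (hoff i j hij) (mul_nonneg (hu i) (hv j))

theorem PosDef.nonneg_of_nonneg_mulVec {A : Matrix ι ι ℝ} (hA : A.PosDef)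
    (hoff : ∀ i j, i ≠ j → A i j ≤ 0) {x : ι → ℝ} (hAx : 0 ≤ A *ᵥ x) : 0 ≤ x := by
  have hdisj : ∀ i, x⁻ i * x⁺ i = 0 := fun i => by
    rcases le_total 0 (x i) with h | h
    · simp [show (x i)⁻ = 0 from negPart_eq_zero.2 h]
    · simp [show (x i)⁺ = 0 from posPart_eq_zero.2 h]
  have hneg : x⁻ ⬝ᵥ (A *ᵥ x⁻) ≤ 0 := by
    have hsplit : A *ᵥ x⁻ = A *ᵥ x⁺ - A *ᵥ x := by
      rw [← mulVec_sub]
      nth_rw 3 [← posPart_sub_negPart x]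
      rw [sub_sub_cancel]
    rw [hsplit, dotProduct_sub, sub_nonpos]
    exact (dotProduct_mulVec_nonpos_of_offDiag_nonpos hoff (negPart_nonneg x) (posPart_nonneg x)
      hdisj).trans (dotProduct_nonneg_of_nonneg (negPart_nonneg x) hAx)
  by_contra hx
  exact hneg.not_gt (hA.dotProduct_mulVec_pos (mt negPart_eq_zero.1 hx))

end ZMatrix

section Propagation

variable {κ : Type*} [Fintype κ] {B : Matrix κ κ ℝ} {W : κ → ℝ}

theorem eq_zero_of_mulVec_apply_eq_zero (hoff : ∀ a b, a ≠ b → 0 ≤ B a b) (hW : 0 ≤ W)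
    {a b : κ} (hrow : (B *ᵥ W) a = 0) (ha : W a = 0) (hB : 0 < B a b) :
    W b = 0 := by
  have hterms : ∀ c ∈ Finset.univ, 0 ≤ B a c * W c := fun c _ => by
    by_cases hac : a = c
    · subst hac; simp [ha]
    · exact mul_nonneg (hoff a c hac) (hW c)
  have hzero := (Finset.sum_eq_zero_iff_of_nonneg hterms).1 hrow b (Finset.mem_univ b)
  exact (mul_eq_zero.1 hzero).resolve_left hB.ne'

theorem eq_zero_of_reflTransGen (hoff : ∀ a b, a ≠ b → 0 ≤ B a b) (hW : 0 ≤ W)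
    (hrow : ∀ a, W a = 0 → (B *ᵥ W) a = 0) {a c : κ}
    (hpath : Relation.ReflTransGen (fun x y => x ≠ y ∧ 0 < B x y) a c) (ha : W a = 0) :
    W c = 0 := by
  induction hpath with
  | refl => exact ha
  | tail _ hbc ih => exact eq_zero_of_mulVec_apply_eq_zero hoff hW (hrow _ ih) ih hbc.2

end Propagation

end Matrix

section OpenCircuit

variable {n m : ℕ} {B : Matrix (Fin n ⊕ Fin m) (Fin n ⊕ Fin m) ℝ}

theorem mulVec_sumElim_inl (x : Fin n → ℝ) (y : Fin m → ℝ) (i : Fin n) :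
    (B *ᵥ Sum.elim x y) (Sum.inl i) = (BLL B *ᵥ x + BLG B *ᵥ y) i := by
  simp [mulVec, dotProduct, Fintype.sum_sum_type, BLL, BLG]

theorem neg_BLL_mulVec_VLstar (hdet : IsUnit (BLL B).det) (VG : Fin m → ℝ) :
    -BLL B *ᵥ VLstar B VG = BLG B *ᵥ VG := by
  rw [VLstar, neg_mulVec, mulVec_neg, neg_neg, mulVec_mulVec, mul_nonsing_inv _ hdet, one_mulVec]

theorem mulVec_sumElim_VLstar_inl (hdet : IsUnit (BLL B).det) (VG : Fin m → ℝ) (i : Fin n) :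
    (B *ᵥ Sum.elim (VLstar B VG) VG) (Sum.inl i) = 0 := by
  rw [mulVec_sumElim_inl, ← neg_BLL_mulVec_VLstar hdet, neg_mulVec, add_neg_cancel, Pi.zero_apply]

end OpenCircuit

theorem stmt2_general {n m : ℕ} (hm : 0 < m)
    (B : Matrix (Fin n ⊕ Fin m) (Fin n ⊕ Fin m) ℝ)
    (VG : Fin m → ℝ)
    (hoffdiag : ∀ a b : Fin n ⊕ Fin m, a ≠ b → 0 ≤ B a b)
    (hconn : ∀ a b : Fin n ⊕ Fin m,
      Relation.ReflTransGen (fun x y => x ≠ y ∧ 0 < B x y) a b)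
    (hBLL : (-(BLL B)).PosDef)
    (hVG : ∀ j, 0 < VG j) :
    ∀ i : Fin n, 0 < VLstar B VG i := by
  have hdet : IsUnit (BLL B).det := by
    simpa [isUnit_iff_isUnit_det] using hBLL.isUnit.neg
  have hCVG : 0 ≤ BLG B *ᵥ VG := fun _ =>
    dotProduct_nonneg_of_nonneg (fun _ => hoffdiag _ _ Sum.inl_ne_inr) fun j => (hVG j).le
  have hVL : 0 ≤ VLstar B VG := hBLL.nonneg_of_nonneg_mulVec
    (fun i j hij => neg_nonpos.2 (hoffdiag _ _ (Sum.inl_injective.ne hij)))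
    (neg_BLL_mulVec_VLstar hdet VG ▸ hCVG)
  set W := Sum.elim (VLstar B VG) VG
  have hW : 0 ≤ W := by
    rintro (i | j)
    exacts [hVL i, (hVG j).le]
  have hrow : ∀ a, W a = 0 → (B *ᵥ W) a = 0 := by
    rintro (i | j) h
    exacts [mulVec_sumElim_VLstar_inl hdet VG i, absurd h (hVG j).ne']
  intro i
  refine (hVL i).lt_of_ne fun h => (hVG ⟨0, hm⟩).ne' ?_
  exact eq_zero_of_reflTransGen hoffdiag hW hrow (hconn (Sum.inl i) (Sum.inr ⟨0, hm⟩)) h.symm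

/-- Every component of the open-circuit load voltage vector V_L* = −B_LL⁻¹ B_LG V_G
is strictly positive. -/
theorem stmt2 {n m : ℕ} (hn : 0 < n) (hm : 0 < m)
    (B : Matrix (Fin n ⊕ Fin m) (Fin n ⊕ Fin m) ℝ)
    (VG : Fin m → ℝ)
    (hsym : Bᵀ = B)
    (hoffdiag : ∀ a b : Fin n ⊕ Fin m, a ≠ b → 0 ≤ B a b)
    (hconn : ∀ a b : Fin n ⊕ Fin m,
      Relation.ReflTransGen (fun x y => x ≠ y ∧ 0 < B x y) a b)
    (hBLL : (-(BLL B)).PosDef)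
    (hVG : ∀ j, 0 < VG j) :
    ∀ i : Fin n, 0 < VLstar B VG i :=
  stmt2_general hm B VG hoffdiag hconn hBLL hVG
end

section
/- Let A ∈ ℝ^{N×E} have trivial kernel (so AᵀA is invertible), let D ∈ ℝ^{E×E} be diagonal with all diagonal entries nonzero, let P ∈ ℝ^N, and suppose x ∈ ℝ^N satisfies A D Aᵀ x = P. Then Aᵀ x = D⁻¹ (AᵀA)⁻¹ Aᵀ P. -/
open Matrix

/-- If A has trivial kernel, D is diagonal with nonzero diagonal entries, and
A D Aᵀ x = P, then Aᵀ x = D⁻¹ (AᵀA)⁻¹ Aᵀ P. -/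
theorem stmt5 {N E : ℕ} (A : Matrix (Fin N) (Fin E) ℝ)
    (D : Matrix (Fin E) (Fin E) ℝ)
    (hker : ∀ p : Fin E → ℝ, A.mulVec p = 0 → p = 0)
    (hD : D.IsDiag) (hDnz : ∀ e : Fin E, D e e ≠ 0)
    (P : Fin N → ℝ) (x : Fin N → ℝ)
    (hx : (A * D * Aᵀ).mulVec x = P) :
    Aᵀ.mulVec x = (D⁻¹ * (Aᵀ * A)⁻¹ * Aᵀ).mulVec P := by
  have hAtA : IsUnit (Aᵀ * A) := by
    rw [← Matrix.mulVec_injective_iff_isUnit]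
    intro u v huv
    have h0 : A.mulVec (u - v) = 0 := by
      have h : (Aᵀ * A).mulVec (u - v) = 0 := by
        rw [Matrix.mulVec_sub, huv, sub_self]
      have := (Matrix.ker_mulVecLin_transpose_mul_self A).le
        (show u - v ∈ LinearMap.ker (Aᵀ * A).mulVecLin from h)
      simpa using this
    have := hker _ h0
    exact sub_eq_zero.mp this
  have hDdiag : D = Matrix.diagonal (fun e => D e e) := by
    ext i j
    by_cases h : i = j
    · subst h; simp
    · simp [Matrix.diagonal, h, hD h]
  have hDdet : IsUnit D.det := by
    rw [hDdiag, Matrix.det_diagonal]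
    exact isUnit_iff_ne_zero.mpr (Finset.prod_ne_zero_iff.mpr fun e _ => hDnz e)
  have hAtAdet : IsUnit (Aᵀ * A).det := (Matrix.isUnit_iff_isUnit_det _).mp hAtA
  have key : D⁻¹ * (Aᵀ * A)⁻¹ * Aᵀ * (A * D * Aᵀ) = Aᵀ := by
    have : D⁻¹ * (Aᵀ * A)⁻¹ * Aᵀ * (A * D * Aᵀ)
        = D⁻¹ * ((Aᵀ * A)⁻¹ * (Aᵀ * A)) * (D * Aᵀ) := by
      simp only [Matrix.mul_assoc]
    rw [this, Matrix.nonsing_inv_mul _ hAtAdet, Matrix.mul_one, ← Matrix.mul_assoc,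
      Matrix.nonsing_inv_mul _ hDdet, Matrix.one_mul]
  rw [← hx, Matrix.mulVec_mulVec, key]
end
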